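/- arXiv:1605.00291 — 2 statements merged into one kernel-verified Lean document; each statement's English description precedes it below -/
import Mathlib

section
/- For all complex q with |q| < 1, the sum over n ≥ 0 of q^{n^2+2n} (-q;q^2)_n / ((q^2;q^2)_n)^2 equals ((-q;q^2)_∞ / (q^2;q^2)_∞) times the sum over n ≥ 0 of (-1)^n q^{n^2+n} / (-q;q^2)_{n+1}. -/
noncomputable def qPoch (a q : ℂ) (n : ℕ) : ℂ := ∏ i ∈ Finset.range n, (1 - a * q ^ i)

noncomputable def qPochInf (a q : ℂ) : ℂ := ∏' i : ℕ, (1 - a * q ^ i)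

/-!
Multiply both sides by `(q²;q²)_∞`. On the left write `(q²;q²)_∞ = (q²;q²)_n (q^{2n+2};q²)_∞`,
on the right `(-q;q²)_∞ = (-q;q²)_{n+1} (-q^{2n+3};q²)_∞`, and expand the remaining infinite
products by Euler's identity `(z;Q)_∞ = ∑ₘ (-1)^m Q^{m(m-1)/2} z^m / (Q;Q)_m`, itself the limit of
the finite q-binomial theorem by Tannery's theorem. Both sides become absolutely convergent double
series whose terms with `n + m = N` share the factor `q^{N²+N}`. The remaining finite sums agree by
induction on `N`, which rests on the q-analogue `∑ₙ [N n]_Q b^{N-n} (b;Q)_n = 1` of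
`(b + (1 - b))^N = 1`.
-/

open Finset Filter Topology

theorem Summable.tsum_eq_tsum_sum_antidiagonal {α A : Type*} [AddCommMonoid A]
    [HasAntidiagonal A] [AddCommMonoid α] [TopologicalSpace α] [ContinuousAdd α] [T3Space α]
    {f : A × A → α} (hf : Summable f) : ∑' p, f p = ∑' n, ∑ p ∈ antidiagonal n, f p := by
  rw [← HasAntidiagonal.sigmaAntidiagonalEquivProd.tsum_eq f]
  refine ((HasAntidiagonal.sigmaAntidiagonalEquivProd.summable_iff.mpr hf).tsum_sigma'
    fun n => (hasSum_fintype _).summable).trans (tsum_congr fun n => ?_)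
  rw [tsum_fintype]
  exact sum_coe_sort (antidiagonal n) f

lemma Nat.choose_two_succ (m : ℕ) : (m + 1).choose 2 = m.choose 2 + m := by
  rw [Nat.choose_succ_succ, Nat.choose_one_right, add_comm]

lemma Nat.choose_two_mul_two_add_self (m : ℕ) : m.choose 2 * 2 + m = m ^ 2 := by
  induction m with
  | zero => rfl
  | succ m ih => rw [Nat.choose_two_succ]; linear_combination ih

lemma summable_pow_choose_two_mul_pow {ρ : ℝ} (hρ0 : 0 ≤ ρ) (hρ : ρ < 1) (r : ℝ) :
    Summable fun m : ℕ => ρ ^ m.choose 2 * r ^ m := by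
  have hratio : Tendsto (fun m => ρ ^ m * |r|) atTop (𝓝 0) := by
    simpa using (tendsto_pow_atTop_nhds_zero_of_lt_one hρ0 hρ).mul_const |r|
  refine summable_of_ratio_norm_eventually_le (r := 1 / 2) (by norm_num) ?_
  filter_upwards [hratio.eventually_le_const (by norm_num : (0 : ℝ) < 1 / 2)] with m hm
  calc ‖ρ ^ (m + 1).choose 2 * r ^ (m + 1)‖ = (ρ ^ m * |r|) * ‖ρ ^ m.choose 2 * r ^ m‖ := by
        simp only [Nat.choose_two_succ, Real.norm_eq_abs, abs_mul, abs_pow, abs_of_nonneg hρ0]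
        ring
    _ ≤ 1 / 2 * ‖ρ ^ m.choose 2 * r ^ m‖ := by gcongr

section Pochhammer

variable {a Q : ℂ}

@[simp] lemma qPoch_zero (a Q : ℂ) : qPoch a Q 0 = 1 := prod_range_zero _

lemma qPoch_succ (a Q : ℂ) (n : ℕ) : qPoch a Q (n + 1) = qPoch a Q n * (1 - a * Q ^ n) :=
  prod_range_succ _ _

lemma qPoch_succ' (a Q : ℂ) (n : ℕ) : qPoch a Q (n + 1) = (1 - a) * qPoch (a * Q) Q n := by
  simp only [qPoch, prod_range_succ', pow_succ, pow_zero, mul_one]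
  rw [mul_comm]
  congr 1
  exact prod_congr rfl fun i _ => by ring

lemma one_sub_mul_pow_ne_zero (ha : ‖a‖ < 1) (hQ : ‖Q‖ ≤ 1) (i : ℕ) : 1 - a * Q ^ i ≠ 0 := by
  refine sub_ne_zero.mpr fun h => ?_
  have : ‖a * Q ^ i‖ < 1 := by
    rw [norm_mul, norm_pow]
    exact (mul_le_of_le_one_right (norm_nonneg a) (pow_le_one₀ (norm_nonneg Q) hQ)).trans_lt ha
  simp [← h] at this

lemma qPoch_ne_zero (ha : ‖a‖ < 1) (hQ : ‖Q‖ ≤ 1) (n : ℕ) : qPoch a Q n ≠ 0 :=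
  prod_ne_zero_iff.mpr fun i _ => one_sub_mul_pow_ne_zero ha hQ i

variable (hQ : ‖Q‖ < 1)
include hQ

lemma summable_norm_neg_mul_pow (a : ℂ) : Summable fun i : ℕ => ‖-(a * Q ^ i)‖ := by
  simpa only [norm_neg, norm_mul, norm_pow] using
    (summable_geometric_of_lt_one (norm_nonneg Q) hQ).mul_left ‖a‖

lemma multipliable_one_sub_mul_pow (a : ℂ) : Multipliable fun i : ℕ => 1 - a * Q ^ i := by
  simpa only [sub_eq_add_neg] using
    multipliable_one_add_of_summable (summable_norm_neg_mul_pow hQ a)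

lemma tendsto_qPoch (a : ℂ) : Tendsto (qPoch a Q) atTop (𝓝 (qPochInf a Q)) :=
  (multipliable_one_sub_mul_pow hQ a).hasProd.tendsto_prod_nat

lemma qPochInf_ne_zero (ha : ‖a‖ < 1) : qPochInf a Q ≠ 0 := by
  simpa only [qPochInf, sub_eq_add_neg] using tprod_one_add_ne_zero_of_summable
    (fun i => by simpa only [← sub_eq_add_neg] using one_sub_mul_pow_ne_zero ha hQ.le i)
    (summable_norm_neg_mul_pow hQ a)

lemma qPoch_mul_qPochInf (a : ℂ) (k : ℕ) :
    qPoch a Q k * qPochInf (a * Q ^ k) Q = qPochInf a Q := by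
  have shift : ∀ i, 1 - a * Q ^ (i + k) = 1 - a * Q ^ k * Q ^ i := fun i => by ring
  have h := Multipliable.prod_mul_tprod_nat_mul' (f := fun i => 1 - a * Q ^ i) (k := k)
    (by simpa only [shift] using multipliable_one_sub_mul_pow hQ (a * Q ^ k))
  simpa only [qPoch, qPochInf, shift] using h

lemma exists_norm_qPoch_le (a : ℂ) : ∃ C, ∀ n, ‖qPoch a Q n‖ ≤ C := by
  obtain ⟨C, hC⟩ := isBounded_iff_forall_norm_le.mp
    (Metric.isBounded_range_of_tendsto _ (tendsto_qPoch hQ a))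
  exact ⟨C, fun n => hC _ ⟨n, rfl⟩⟩

lemma exists_norm_inv_qPoch_le (ha : ‖a‖ < 1) : ∃ C, ∀ n, ‖(qPoch a Q n)⁻¹‖ ≤ C := by
  obtain ⟨C, hC⟩ := isBounded_iff_forall_norm_le.mp (Metric.isBounded_range_of_tendsto _
    ((tendsto_qPoch hQ a).inv₀ (qPochInf_ne_zero hQ ha)))
  exact ⟨C, fun n => hC _ ⟨n, rfl⟩⟩

end Pochhammer

/-- The Gaussian binomial coefficient, defined by the q-Pascal rule so that it makes sense for
every `Q`; `qBinom_eq_div` recovers `(Q;Q)_{m+n} / ((Q;Q)_m (Q;Q)_n)`. -/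
def qBinom (Q : ℂ) : ℕ → ℕ → ℂ
  | _, 0 => 1
  | 0, _ + 1 => 0
  | N + 1, m + 1 => qBinom Q N m + Q ^ (m + 1) * qBinom Q N (m + 1)

section GaussianBinomial

variable {Q : ℂ}

@[simp] lemma qBinom_zero_right (Q : ℂ) (N : ℕ) : qBinom Q N 0 = 1 := by cases N <;> rfl

lemma qBinom_succ_succ (Q : ℂ) (N m : ℕ) :
    qBinom Q (N + 1) (m + 1) = qBinom Q N m + Q ^ (m + 1) * qBinom Q N (m + 1) := rfl

lemma qBinom_of_lt {N m : ℕ} (h : N < m) : qBinom Q N m = 0 := by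
  induction N generalizing m with
  | zero => obtain ⟨m, rfl⟩ := Nat.exists_eq_add_of_lt h; rfl
  | succ N ih =>
    obtain ⟨m, rfl⟩ := Nat.exists_eq_add_of_le' (Nat.one_le_of_lt h)
    rw [qBinom_succ_succ, ih (by omega), ih (by omega), mul_zero, add_zero]

@[simp] lemma qBinom_self (Q : ℂ) (N : ℕ) : qBinom Q N N = 1 := by
  induction N with
  | zero => rfl
  | succ N ih =>
    rw [qBinom_succ_succ, ih, qBinom_of_lt (Nat.lt_succ_self N), mul_zero, add_zero]

lemma qBinom_mul_qPoch_mul_qPoch (Q : ℂ) (m n : ℕ) :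
    qBinom Q (m + n) m * qPoch Q Q m * qPoch Q Q n = qPoch Q Q (m + n) := by
  induction m generalizing n with
  | zero => simp
  | succ m ihm =>
    induction n with
    | zero => simp
    | succ n ihn =>
      have hm := ihm (n + 1)
      rw [show m + 1 + n = m + (n + 1) by ring, qPoch_succ Q Q m] at ihn
      rw [qPoch_succ Q Q n] at hm
      rw [show m + 1 + (n + 1) = m + (n + 1) + 1 by ring, qBinom_succ_succ,
        qPoch_succ Q Q (m + (n + 1)), qPoch_succ Q Q m, qPoch_succ Q Q n]
      linear_combination (1 - Q * Q ^ m) * hm + Q ^ (m + 1) * (1 - Q * Q ^ n) * ihn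

theorem qPoch_eq_sum_qBinom (z Q : ℂ) (N : ℕ) :
    qPoch z Q N = ∑ m ∈ range (N + 1), (-1) ^ m * Q ^ m.choose 2 * qBinom Q N m * z ^ m := by
  induction N generalizing z with
  | zero => simp
  | succ N ih =>
    set c : ℕ → ℂ := fun m => (-1) ^ m * Q ^ m.choose 2 * qBinom Q N m * (z * Q) ^ m with hc
    have hterm : ∀ m, (-1) ^ (m + 1) * Q ^ (m + 1).choose 2 * qBinom Q (N + 1) (m + 1)
        * z ^ (m + 1) = -z * c m + c (m + 1) := fun m => by
      simp only [hc, qBinom_succ_succ, Nat.choose_two_succ]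
      ring
    have htail : ∑ m ∈ range (N + 1), c (m + 1) + 1 = ∑ m ∈ range (N + 1), c m := by
      have hc0 : c 0 = 1 := by simp [hc]
      rw [← hc0, ← sum_range_succ' c (N + 1), sum_range_succ, add_eq_left]
      simp [hc, qBinom_of_lt (Nat.lt_succ_self N)]
    rw [qPoch_succ', ih, sum_range_succ' _ (N + 1), sum_congr rfl fun m _ => hterm m,
      sum_add_distrib, ← mul_sum, ← htail]
    simp only [hc, neg_mul, pow_zero, Nat.choose_zero_succ, mul_one, qBinom_zero_right]
    ring

variable (hQ : ‖Q‖ < 1)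
include hQ

lemma qBinom_eq_div (m n : ℕ) :
    qBinom Q (m + n) m = qPoch Q Q (m + n) / (qPoch Q Q m * qPoch Q Q n) := by
  rw [← qBinom_mul_qPoch_mul_qPoch, mul_assoc, mul_div_cancel_right₀ _
    (mul_ne_zero (qPoch_ne_zero hQ hQ.le m) (qPoch_ne_zero hQ hQ.le n))]

lemma tendsto_qBinom (m : ℕ) : Tendsto (qBinom Q · m) atTop (𝓝 (qPoch Q Q m)⁻¹) := by
  have hP := qPochInf_ne_zero hQ hQ
  have hnum := (tendsto_add_atTop_iff_nat m).mpr (tendsto_qPoch hQ Q)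
  have hlim := hnum.div ((tendsto_qPoch hQ Q).const_mul (qPoch Q Q m))
    (mul_ne_zero (qPoch_ne_zero hQ hQ.le m) hP)
  rw [mul_comm, ← div_div, div_self hP, one_div] at hlim
  refine (tendsto_add_atTop_iff_nat m).mp (hlim.congr fun n => ?_)
  simp only [Pi.div_apply, add_comm n m, qBinom_eq_div hQ]

lemma exists_norm_qBinom_le : ∃ C, ∀ N m, ‖qBinom Q N m‖ ≤ C := by
  obtain ⟨B, hB⟩ := exists_norm_qPoch_le hQ Q
  obtain ⟨C, hC⟩ := exists_norm_inv_qPoch_le hQ hQ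
  have hB0 : 0 ≤ B := (norm_nonneg _).trans (hB 0)
  have hC0 : 0 ≤ C := (norm_nonneg _).trans (hC 0)
  refine ⟨B * (C * C), fun N m => ?_⟩
  rcases le_or_gt m N with h | h
  · obtain ⟨n, rfl⟩ := Nat.exists_eq_add_of_le h
    rw [qBinom_eq_div hQ, div_eq_mul_inv, mul_inv, norm_mul, norm_mul]
    gcongr
    exacts [hB _, hC _, hC _]
  · rw [qBinom_of_lt h, norm_zero]
    positivity

theorem qPochInf_eq_tsum (z : ℂ) :
    qPochInf z Q = ∑' m : ℕ, (-1) ^ m * Q ^ m.choose 2 * z ^ m / qPoch Q Q m := by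
  obtain ⟨C, hC⟩ := exists_norm_qBinom_le hQ
  have hpartial : ∀ N, qPoch z Q N = ∑' m, (-1) ^ m * Q ^ m.choose 2 * z ^ m * qBinom Q N m :=
    fun N => by
      rw [qPoch_eq_sum_qBinom, tsum_eq_sum fun m hm => ?_]
      · exact sum_congr rfl fun m _ => by ring
      · rw [qBinom_of_lt (by simpa using hm), mul_zero]
  refine tendsto_nhds_unique (tendsto_qPoch hQ z) ?_
  simp_rw [funext hpartial, div_eq_mul_inv]
  refine tendsto_tsum_of_dominated_convergence
    ((summable_pow_choose_two_mul_pow (norm_nonneg Q) hQ ‖z‖).mul_left C)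
    (fun m => (tendsto_qBinom hQ m).const_mul _) (Eventually.of_forall fun N m => ?_)
  simp only [norm_mul, norm_pow, norm_neg, norm_one, one_pow, one_mul]
  rw [mul_comm]
  exact mul_le_mul_of_nonneg_right (hC N m) (by positivity)

end GaussianBinomial

section FiniteIdentities

lemma sum_antidiagonal_qBinom_mul_pow_mul_qPoch (b Q : ℂ) (N : ℕ) :
    ∑ p ∈ antidiagonal N, qBinom Q N p.1 * b ^ p.2 * qPoch b Q p.1 = 1 := by
  induction N with
  | zero => simp
  | succ N ih =>
    set T := ∑ p ∈ antidiagonal (N + 1), Q ^ p.1 * qBinom Q N p.1 * b ^ p.2 * qPoch b Q p.1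
    have hT : T = b ^ (N + 1) + ∑ p ∈ antidiagonal N,
        Q ^ (p.1 + 1) * qBinom Q N (p.1 + 1) * b ^ p.2 * qPoch b Q (p.1 + 1) := by
      simp [T, Nat.sum_antidiagonal_succ]
    have hT' : T = ∑ p ∈ antidiagonal N,
        Q ^ p.1 * qBinom Q N p.1 * b ^ (p.2 + 1) * qPoch b Q p.1 := by
      simp [T, Nat.sum_antidiagonal_succ', qBinom_of_lt (Nat.lt_succ_self N)]
    have hterm : ∀ i j : ℕ, qBinom Q (N + 1) (i + 1) * b ^ j * qPoch b Q (i + 1)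
        = qBinom Q N i * b ^ j * qPoch b Q i - Q ^ i * qBinom Q N i * b ^ (j + 1) * qPoch b Q i
          + Q ^ (i + 1) * qBinom Q N (i + 1) * b ^ j * qPoch b Q (i + 1) := fun i j => by
      rw [qBinom_succ_succ, qPoch_succ b Q i]
      ring
    rw [Nat.sum_antidiagonal_succ, sum_congr rfl fun p _ => hterm p.1 p.2, sum_add_distrib,
      sum_sub_distrib, ih]
    simp only [qBinom_zero_right, qPoch_zero, one_mul, mul_one]
    linear_combination hT' - hT

variable {Q : ℂ} (hQ : ‖Q‖ < 1)
include hQ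

lemma sum_antidiagonal_pow_mul_qPoch_div (b : ℂ) (N : ℕ) :
    ∑ p ∈ antidiagonal N, b ^ p.2 * qPoch b Q p.1 / (qPoch Q Q p.1 * qPoch Q Q p.2)
      = (qPoch Q Q N)⁻¹ := by
  rw [← mul_one (qPoch Q Q N)⁻¹, ← sum_antidiagonal_qBinom_mul_pow_mul_qPoch b Q N, mul_sum]
  refine sum_congr rfl fun p hp => ?_
  rw [← mem_antidiagonal.mp hp, qBinom_eq_div hQ]
  have := qPoch_ne_zero hQ hQ.le (p.1 + p.2)
  field_simp

/-- Both sides satisfy `S (N + 1) = x ^ (N + 1) / (Q;Q)_{N+1} - S N`. On the left, split each term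
as `Q ^ m * t + (1 - Q ^ m) * t`: the first parts sum to `x ^ (N + 1) / (Q;Q)_{N+1}` because
`(-Q) ^ m = (b * x) ^ m`, and `(1 - Q ^ (m + 1)) / (Q;Q)_{m+1} = 1 / (Q;Q)_m` turns the second
parts into `-S N`. -/
theorem sum_antidiagonal_neg_one_pow_mul_qPoch_div {b x : ℂ} (hbx : b * x = -Q) (N : ℕ) :
    ∑ p ∈ antidiagonal N, (-1) ^ p.2 * x ^ p.1 * qPoch b Q p.1 / (qPoch Q Q p.1 * qPoch Q Q p.2)
      = ∑ p ∈ antidiagonal N, (-1) ^ p.1 * x ^ p.2 / qPoch Q Q p.2 := by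
  induction N with
  | zero => simp
  | succ N ih =>
    set t : ℕ × ℕ → ℂ :=
      fun p => (-1) ^ p.2 * x ^ p.1 * qPoch b Q p.1 / (qPoch Q Q p.1 * qPoch Q Q p.2) with ht
    have hmain : ∑ p ∈ antidiagonal (N + 1), Q ^ p.2 * t p = x ^ (N + 1) / qPoch Q Q (N + 1) := by
      rw [div_eq_mul_inv, ← sum_antidiagonal_pow_mul_qPoch_div hQ b, mul_sum]
      refine sum_congr rfl fun p hp => ?_
      rw [← mem_antidiagonal.mp hp]
      have hpow : (-1 : ℂ) ^ p.2 * Q ^ p.2 = b ^ p.2 * x ^ p.2 := by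
        rw [← mul_pow, ← mul_pow, hbx, neg_one_mul]
      simp only [ht, pow_add]
      linear_combination (x ^ p.1 * qPoch b Q p.1 / (qPoch Q Q p.1 * qPoch Q Q p.2)) * hpow
    have hrest : ∑ p ∈ antidiagonal (N + 1), (1 - Q ^ p.2) * t p
        = -∑ p ∈ antidiagonal N, t p := by
      rw [Nat.sum_antidiagonal_succ', ← sum_neg_distrib]
      simp only [pow_zero, sub_self, zero_mul, zero_add]
      refine sum_congr rfl fun p _ => ?_
      have h1 := qPoch_ne_zero hQ hQ.le p.1
      have h2 := qPoch_ne_zero hQ hQ.le p.2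
      have h3 := one_sub_mul_pow_ne_zero hQ hQ.le p.2
      simp only [ht, qPoch_succ Q Q p.2]
      field_simp
      ring
    rw [sum_congr rfl fun p _ => (show t p = Q ^ p.2 * t p + (1 - Q ^ p.2) * t p by ring),
      sum_add_distrib, hmain, hrest, ih, Nat.sum_antidiagonal_succ]
    simp only [pow_succ, pow_zero, one_mul, mul_neg_one, neg_mul, neg_div, sum_neg_distrib]

end FiniteIdentities

lemma sq_pow_choose_two_mul_pow_mul_pow (q : ℂ) (n m : ℕ) :
    (q ^ 2) ^ m.choose 2 * ((q ^ 2) ^ (n + 1)) ^ m * q ^ (n ^ 2 + n)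
      = q ^ ((n + m) ^ 2 + (n + m)) := by
  rw [← pow_mul, ← pow_mul, ← pow_mul, ← pow_add, ← pow_add]
  congr 1
  linear_combination Nat.choose_two_mul_two_add_self m

lemma sum_antidiagonal_pow_diag_mul (q : ℂ) (w : ℕ × ℕ → ℂ) (N : ℕ) :
    ∑ p ∈ antidiagonal N, q ^ ((p.1 + p.2) ^ 2 + (p.1 + p.2)) * w p
      = q ^ (N ^ 2 + N) * ∑ p ∈ antidiagonal N, w p := by
  rw [mul_sum]
  exact sum_congr rfl fun p hp => by rw [mem_antidiagonal.mp hp]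

section DoubleSeries

variable {q : ℂ} (hq : ‖q‖ < 1)
include hq

lemma norm_sq_lt_one : ‖q ^ 2‖ < 1 := by
  rw [norm_pow]
  exact pow_lt_one₀ (norm_nonneg q) hq two_ne_zero

lemma summable_pow_diag_mul {w : ℕ × ℕ → ℂ} {C : ℝ} (hw : ∀ p, ‖w p‖ ≤ C) :
    Summable fun p : ℕ × ℕ => q ^ ((p.1 + p.2) ^ 2 + (p.1 + p.2)) * w p := by
  have hgeom := summable_geometric_of_lt_one (norm_nonneg q) hq
  have hC : 0 ≤ C := (norm_nonneg _).trans (hw 0)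
  refine Summable.of_norm_bounded ((hgeom.mul_of_nonneg hgeom (fun _ => by positivity)
    (fun _ => by positivity)).mul_left C) fun p => ?_
  rw [norm_mul, norm_pow, ← pow_add, mul_comm]
  exact mul_le_mul (hw p) (pow_le_pow_of_le_one (norm_nonneg q) hq.le (Nat.le_add_left _ _))
    (by positivity) hC

lemma summable_lhs_double :
    Summable fun p : ℕ × ℕ => q ^ ((p.1 + p.2) ^ 2 + (p.1 + p.2)) * ((-1) ^ p.2 * q ^ p.1 *
      qPoch (-q) (q ^ 2) p.1 / (qPoch (q ^ 2) (q ^ 2) p.1 * qPoch (q ^ 2) (q ^ 2) p.2)) := by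
  obtain ⟨B, hB⟩ := exists_norm_qPoch_le (norm_sq_lt_one hq) (-q)
  obtain ⟨C, hC⟩ := exists_norm_inv_qPoch_le (norm_sq_lt_one hq) (norm_sq_lt_one hq)
  have hB0 : 0 ≤ B := (norm_nonneg _).trans (hB 0)
  have hC0 : 0 ≤ C := (norm_nonneg _).trans (hC 0)
  refine summable_pow_diag_mul hq (C := B * (C * C)) fun p => ?_
  simp only [div_eq_mul_inv, mul_inv, norm_mul, norm_pow, norm_neg, norm_one, one_pow, one_mul]
  calc _ ≤ 1 * B * (C * C) := by
        gcongr
        exacts [pow_le_one₀ (norm_nonneg q) hq.le, hB _, hC _, hC _]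
    _ = B * (C * C) := by rw [one_mul]

lemma summable_rhs_double :
    Summable fun p : ℕ × ℕ => q ^ ((p.1 + p.2) ^ 2 + (p.1 + p.2)) *
      ((-1) ^ p.1 * q ^ p.2 / qPoch (q ^ 2) (q ^ 2) p.2) := by
  obtain ⟨C, hC⟩ := exists_norm_inv_qPoch_le (norm_sq_lt_one hq) (norm_sq_lt_one hq)
  have hC0 : 0 ≤ C := (norm_nonneg _).trans (hC 0)
  refine summable_pow_diag_mul hq (C := C) fun p => ?_
  simp only [div_eq_mul_inv, norm_mul, norm_pow, norm_neg, norm_one, one_pow, one_mul]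
  calc _ ≤ 1 * C := by
        gcongr
        exacts [pow_le_one₀ (norm_nonneg q) hq.le, hC _]
    _ = C := one_mul C

lemma lhs_mul_qPochInf :
    (∑' n : ℕ, q ^ (n ^ 2 + 2 * n) * qPoch (-q) (q ^ 2) n / (qPoch (q ^ 2) (q ^ 2) n) ^ 2)
        * qPochInf (q ^ 2) (q ^ 2)
      = ∑' p : ℕ × ℕ, q ^ ((p.1 + p.2) ^ 2 + (p.1 + p.2)) * ((-1) ^ p.2 * q ^ p.1 *
        qPoch (-q) (q ^ 2) p.1 / (qPoch (q ^ 2) (q ^ 2) p.1 * qPoch (q ^ 2) (q ^ 2) p.2)) := by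
  have hQ := norm_sq_lt_one hq
  have hs := summable_lhs_double hq
  rw [hs.tsum_prod' hs.prod_factor, ← tsum_mul_right]
  refine tsum_congr fun n => ?_
  rw [← qPoch_mul_qPochInf hQ (q ^ 2) n, ← pow_succ', qPochInf_eq_tsum hQ, ← mul_assoc,
    ← tsum_mul_left]
  refine tsum_congr fun m => ?_
  have h1 := qPoch_ne_zero hQ hQ.le n
  have h2 := qPoch_ne_zero hQ hQ.le m
  rw [← sq_pow_choose_two_mul_pow_mul_pow q n m]
  field_simp
  ring

lemma rhs_mul_qPochInf :
    qPochInf (-q) (q ^ 2) / qPochInf (q ^ 2) (q ^ 2)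
        * (∑' n : ℕ, (-1) ^ n * q ^ (n ^ 2 + n) / qPoch (-q) (q ^ 2) (n + 1))
        * qPochInf (q ^ 2) (q ^ 2)
      = ∑' p : ℕ × ℕ, q ^ ((p.1 + p.2) ^ 2 + (p.1 + p.2)) *
        ((-1) ^ p.1 * q ^ p.2 / qPoch (q ^ 2) (q ^ 2) p.2) := by
  have hQ := norm_sq_lt_one hq
  have hs := summable_rhs_double hq
  rw [div_mul_eq_mul_div, div_mul_cancel₀ _ (qPochInf_ne_zero hQ hQ), ← tsum_mul_left,
    hs.tsum_prod' hs.prod_factor]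
  refine tsum_congr fun n => ?_
  rw [← qPoch_mul_qPochInf hQ (-q) (n + 1), qPochInf_eq_tsum hQ, mul_comm, ← mul_assoc,
    ← tsum_mul_left]
  refine tsum_congr fun k => ?_
  have h1 := qPoch_ne_zero (a := -q) (by rwa [norm_neg]) hQ.le (n + 1)
  have h2 := qPoch_ne_zero hQ hQ.le k
  have hsign : (-1 : ℂ) ^ k * (-(q * (q ^ 2) ^ (n + 1))) ^ k
      = q ^ k * ((q ^ 2) ^ (n + 1)) ^ k := by
    rw [← mul_pow, neg_one_mul, neg_neg, mul_pow]
  rw [← sq_pow_choose_two_mul_pow_mul_pow q n k]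
  field_simp
  linear_combination (q ^ (n ^ 2 + n) * (q ^ 2) ^ k.choose 2) * hsign

end DoubleSeries

theorem stmt_1 (q : ℂ) (hq : ‖q‖ < 1) :
    ∑' n : ℕ, q ^ (n ^ 2 + 2 * n) * qPoch (-q) (q ^ 2) n / (qPoch (q ^ 2) (q ^ 2) n) ^ 2
      = qPochInf (-q) (q ^ 2) / qPochInf (q ^ 2) (q ^ 2)
        * ∑' n : ℕ, (-1) ^ n * q ^ (n ^ 2 + n) / qPoch (-q) (q ^ 2) (n + 1) := by
  have hQ := norm_sq_lt_one hq
  rw [← mul_left_inj' (qPochInf_ne_zero hQ hQ), lhs_mul_qPochInf hq, rhs_mul_qPochInf hq,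
    (summable_lhs_double hq).tsum_eq_tsum_sum_antidiagonal,
    (summable_rhs_double hq).tsum_eq_tsum_sum_antidiagonal]
  refine tsum_congr fun N => ?_
  rw [sum_antidiagonal_pow_diag_mul, sum_antidiagonal_pow_diag_mul,
    sum_antidiagonal_neg_one_pow_mul_qPoch_div hQ (by ring)]
end

section
/- For every nonnegative integer n, as formal power series in q, (-q;q)_n / (q;q)_n equals the sum over all partitions π with largest part at most n of 2^{ν_d(π)} q^{|π|}, where ν_d(π) is the number of distinct part sizes of π. -/
open scoped Classical

/-!
Weighting a partition by `a ^ (number of distinct part sizes)` makes its generating function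
multiplicative over part sizes: a size `i` either does not occur or contributes weight `a` and
any positive multiple of `i` to `|π|`, so it contributes the factor
`1 + a (q^i + q^{2i} + ⋯) = (1 + (a - 1) q^i) / (1 - q^i)`. For `a = 2` this is
`(1 + q^i) / (1 - q^i)`.
-/

open Finset PowerSeries
open PowerSeries.WithPiTopology

namespace PowerSeries

theorem one_add_tsum_smul_pow_succ_mul_one_sub {R : Type*} [CommRing R] [TopologicalSpace R]
    [IsTopologicalRing R] [T2Space R] (a : R) {f : R⟦X⟧} (hf : constantCoeff f = 0) :
    (1 + ∑' j : ℕ, a • f ^ (j + 1)) * (1 - f) = 1 + (a - 1) • f := by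
  have hgeom := tsum_pow_mul_one_sub_of_constantCoeff_eq_zero hf
  have hshift : ∑' j : ℕ, a • f ^ (j + 1) = C a * f * ∑' j : ℕ, f ^ j := by
    simp_rw [smul_eq_C_mul, pow_succ', ← mul_assoc]
    exact (summable_pow_of_constantCoeff_eq_zero hf).tsum_mul_left _
  rw [hshift, smul_eq_C_mul, map_sub, map_one]
  linear_combination C a * f * hgeom

end PowerSeries

namespace Nat.Partition

variable {R : Type*} [CommRing R]

theorem prod_toFinsupp_ite_le (a : R) (n : ℕ) {m : ℕ} (π : m.Partition) :
    π.parts.toFinsupp.prod (fun i _ ↦ if i ≤ n then a else 0) =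
      if ∀ p ∈ π.parts, p ≤ n then a ^ #π.parts.toFinset else 0 := by
  simp [Finsupp.prod, prod_ite_zero]

theorem genFun_ite_le (a : R) (n : ℕ) :
    genFun (fun i _ ↦ if i ≤ n then a else 0) =
      PowerSeries.mk fun m ↦ ∑ π ∈ restricted m (· ≤ n), a ^ #π.parts.toFinset := by
  ext m
  simp [prod_toFinsupp_ite_le, restricted, sum_filter]

theorem powerSeriesMk_sum_restricted_pow_card_mul_prod_one_sub_X_pow (a : R) (n : ℕ) :
    (PowerSeries.mk fun m ↦ ∑ π ∈ restricted m (· ≤ n), a ^ #π.parts.toFinset) *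
        ∏ i ∈ range n, (1 - X ^ (i + 1)) =
      ∏ i ∈ range n, (1 + (a - 1) • X ^ (i + 1)) := by
  -- The identity is coefficientwise, so any T2 topology on `R` can sum the series.
  let _ : TopologicalSpace R := ⊥
  have _ : DiscreteTopology R := ⟨rfl⟩
  have hfactors : ∀ i ∉ range n,
      1 + ∑' j : ℕ, (if i + 1 ≤ n then a else 0) • (X : R⟦X⟧) ^ ((i + 1) * (j + 1)) = 1 := by
    intro i hi
    rw [if_neg (fun h ↦ hi (mem_range.2 (Nat.lt_of_succ_le h)))]
    simp only [zero_smul, tsum_zero, add_zero]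
  rw [← genFun_ite_le, ← (hasProd_genFun _).tprod_eq, tprod_eq_prod hfactors, ← prod_mul_distrib]
  refine prod_congr rfl fun i hi ↦ ?_
  rw [if_pos (Nat.succ_le_of_lt (mem_range.1 hi))]
  simp_rw [pow_mul]
  exact one_add_tsum_smul_pow_succ_mul_one_sub a (by simp)

end Nat.Partition

theorem stmt_13 (n : ℕ) :
    (∏ i ∈ Finset.range n, (1 + (PowerSeries.X : PowerSeries ℚ) ^ (i + 1))) *
      (∏ i ∈ Finset.range n, (1 - (PowerSeries.X : PowerSeries ℚ) ^ (i + 1)))⁻¹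
    = PowerSeries.mk (fun m =>
        ∑ π ∈ Finset.univ.filter (fun π : Nat.Partition m => ∀ p ∈ π.parts, p ≤ n),
          (2 : ℚ) ^ π.parts.toFinset.card) := by
  have hden : constantCoeff (∏ i ∈ range n, (1 - (X : ℚ⟦X⟧) ^ (i + 1))) ≠ 0 := by
    simp [map_prod]
  have h := Nat.Partition.powerSeriesMk_sum_restricted_pow_card_mul_prod_one_sub_X_pow (2 : ℚ) n
  simp only [show (2 : ℚ) - 1 = 1 by norm_num, one_smul] at h
  rw [eq_comm, eq_mul_inv_iff_mul_eq hden]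
  exact h
end
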